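/- arXiv:2301.13759 — 6 statements merged into one kernel-verified Lean document; each statement's English description precedes it below -/
import Mathlib

section
/- For any proper function f : X → ℝ ∪ {+∞} and any u ∈ X, the σ-generalized asymptotic function satisfies f^{σg}(u) = inf{ liminf_{n→∞} f(t_n d_n) : t_n → +∞, d_n → u in σ }. -/
open Filter Topology Set

variable {X : Type*} [NormedAddCommGroup X] [NormedSpace ℝ X]

/-- The σ-asymptotic cone of a set `K`. -/
def asympCone (σ : TopologicalSpace X) (K : Set X) : Set X :=
  {u | ∃ t : ℕ → ℝ, ∃ x : ℕ → X, Tendsto t atTop atTop ∧ (∀ k, x k ∈ K) ∧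
      Tendsto (fun k => (t k)⁻¹ • x k) atTop (@nhds X σ u)}

/-- The σ-generalized asymptotic function `f^{σg}`. -/
noncomputable def genAsymp (σ : TopologicalSpace X) (f : X → EReal) (u : X) : EReal :=
  sInf ((fun lam : ℝ => (lam : EReal)) ''
    {lam : ℝ | u ∈ asympCone σ {x | f x ≤ (lam : EReal)}})

/-- The σ-asymptotic function `f^∞_σ`. -/
noncomputable def asympFun (σ : TopologicalSpace X) (f : X → EReal) (u : X) : EReal :=
  sInf {l : EReal | ∃ t : ℕ → ℝ, ∃ d : ℕ → X, Tendsto t atTop atTop ∧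
      Tendsto d atTop (@nhds X σ u) ∧
      l = liminf (fun n => f (t n • d n) / ((t n : ℝ) : EReal)) atTop}

/-- The truncated set `K_n = {x ∈ K : ‖x‖ ≤ n}`. -/
def Kn (K : Set X) (n : ℕ) : Set X := {x ∈ K | ‖x‖ ≤ (n : ℝ)}

/-- The solution set `S(ψ, A)` of the equilibrium problem on `A`. -/
def solSet (ψ : X → X → ℝ) (A : Set X) : Set X := {x ∈ A | ∀ y ∈ A, 0 ≤ ψ x y}

/-- `x ↦ -ψ(x,y)` extended by `+∞` outside `K`. -/
noncomputable def extNeg (K : Set X) (ψ : X → X → ℝ) (y : X) (x : X) : EReal :=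
  haveI := Classical.propDecidable (x ∈ K)
  if x ∈ K then ((-ψ x y : ℝ) : EReal) else ⊤

/-- Condition `(K_σ)`. -/
def CondK (σ : TopologicalSpace X) (K : Set X) (ψ : X → X → ℝ) : Prop :=
  ∀ x : ℕ → X, (∀ n, x n ∈ solSet ψ (Kn K n)) → (∀ C : ℝ, ∃ n, C < ‖x n‖) →
    ∃ φ : ℕ → ℕ, StrictMono φ ∧ ∃ w : ℕ → X, (∀ k, w k ∈ K) ∧
      ∃ d ∈ asympCone σ K, d ≠ 0 ∧
        (∀ k, ∀ y ∈ Kn K (φ k), ψ (x (φ k)) y ≤ ψ (w k) y) ∧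
        Tendsto (fun k => ‖w k‖⁻¹ • w k) atTop (@nhds X σ d)

/-! Writing `x_n = t_n d_n`, a point `u` lies in the σ-asymptotic cone of `K` iff some `t_n → ∞`,
`d_n → u` put `t_n d_n` in `K` frequently (a subsequence then lies in `K`), and
`liminf f (t_n d_n) < λ` forces frequent membership in `[f ≤ λ]`. -/

section AsympCone

variable {σ : TopologicalSpace X} {K : Set X} {u : X}

theorem mem_asympCone_of_frequently {t : ℕ → ℝ} {d : ℕ → X} (ht : Tendsto t atTop atTop)
    (hd : Tendsto d atTop (@nhds X σ u)) (hK : ∃ᶠ n in atTop, t n • d n ∈ K) :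
    u ∈ asympCone σ K := by
  obtain ⟨φ, hφ, hmem⟩ :=
    extraction_of_frequently_atTop (hK.and_eventually (ht.eventually_ge_atTop 1))
  refine ⟨t ∘ φ, fun k => t (φ k) • d (φ k), ht.comp hφ.tendsto_atTop, fun k => (hmem k).1, ?_⟩
  have hcancel : ∀ k, (t (φ k))⁻¹ • t (φ k) • d (φ k) = d (φ k) := fun k =>
    inv_smul_smul₀ (by linarith [(hmem k).2]) _
  simpa only [Function.comp_def, hcancel] using hd.comp hφ.tendsto_atTop

theorem exists_eventually_smul_mem_of_mem_asympCone (hu : u ∈ asympCone σ K) :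
    ∃ t : ℕ → ℝ, ∃ d : ℕ → X, Tendsto t atTop atTop ∧ Tendsto d atTop (@nhds X σ u) ∧
      ∀ᶠ n in atTop, t n • d n ∈ K := by
  obtain ⟨t, x, ht, hx, hconv⟩ := hu
  refine ⟨t, fun n => (t n)⁻¹ • x n, ht, hconv, ?_⟩
  filter_upwards [ht.eventually_ne_atTop 0] with n hn
  simpa only [smul_inv_smul₀ hn] using hx n

end AsympCone

theorem genAsymp_eq_liminf_formula_general (σ : TopologicalSpace X)
    (f : X → EReal) (u : X) :
    genAsymp σ f u =
      sInf {l : EReal | ∃ t : ℕ → ℝ, ∃ d : ℕ → X, Tendsto t atTop atTop ∧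
        Tendsto d atTop (@nhds X σ u) ∧
        l = liminf (fun n => f (t n • d n)) atTop} := by
  apply le_antisymm
  · refine le_sInf ?_
    rintro _ ⟨t, d, ht, hd, rfl⟩
    rw [← EReal.le_of_forall_lt_iff_le]
    intro lam hlam
    have hfreq : ∃ᶠ n in atTop, f (t n • d n) ≤ lam :=
      (frequently_lt_of_liminf_lt (by isBoundedDefault) hlam).mono fun _ => le_of_lt
    exact sInf_le ⟨lam, mem_asympCone_of_frequently ht hd hfreq, rfl⟩
  · refine le_sInf ?_
    rintro _ ⟨lam, hlam, rfl⟩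
    obtain ⟨t, d, ht, hd, hsub⟩ := exists_eventually_smul_mem_of_mem_asympCone hlam
    exact sInf_le_of_le ⟨t, d, ht, hd, rfl⟩ (liminf_le_of_frequently_le hsub.frequently)

theorem genAsymp_eq_liminf_formula (σ : TopologicalSpace X)
    (hcoarser : (inferInstance : TopologicalSpace X) ≤ σ) (hT2 : @T2Space X σ)
    (f : X → EReal) (hproper : ∃ x, f x ≠ ⊤) (hreal : ∀ x, f x ≠ ⊥) (u : X) :
    genAsymp σ f u =
      sInf {l : EReal | ∃ t : ℕ → ℝ, ∃ d : ℕ → X, Tendsto t atTop atTop ∧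
        Tendsto d atTop (@nhds X σ u) ∧
        l = liminf (fun n => f (t n • d n)) atTop} :=
  genAsymp_eq_liminf_formula_general σ f u
end

section
/- Let X = ℓ_p (1 ≤ p ≤ ∞), σ the norm topology, K = {x = (x_i) ∈ ℓ_p : x_i ∈ ℚ for all i}, and f the indicator function of K (0 on K, +∞ off K). Then f^{σg} ≡ 0 on X, yet f is not bounded from above. -/
open Filter Topology Set

variable {X : Type*} [NormedAddCommGroup X] [NormedSpace ℝ X]

lemma rat_dense_lp (p : ENNReal) [Fact (1 ≤ p)] (y : lp (fun _ : ℕ => ℝ) p)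
    {ε : ℝ} (hε : 0 < ε) :
    ∃ x : lp (fun _ : ℕ => ℝ) p, (∀ i : ℕ, ∃ q : ℚ, x i = (q : ℝ)) ∧ ‖x - y‖ ≤ ε := by
  have hq : ∀ i : ℕ, ∃ q : ℚ, |(q : ℝ) - y i| ≤ ε * (1/2 : ℝ) ^ (i + 1) := by
    intro i
    obtain ⟨q, hq⟩ := exists_rat_near (y i) (by positivity : (0:ℝ) < ε * (1/2:ℝ) ^ (i+1))
    exact ⟨q, by rw [abs_sub_comm] at hq; exact hq.le⟩
  choose q hq using hq
  set d : ℕ → ℝ := fun i => (q i : ℝ) - y i with hd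
  have hdb : ∀ i, ‖d i‖ ≤ ε * (1/2 : ℝ) ^ (i + 1) := fun i => hq i
  have hgeom : ∀ i : ℕ, (0:ℝ) ≤ (1/2:ℝ) ^ (i+1) := fun i => by positivity
  have hsum : Summable fun i : ℕ => ε * (1/2 : ℝ) ^ (i + 1) := by
    apply Summable.mul_left
    exact (summable_geometric_of_lt_one (by norm_num) (by norm_num)).comp_injective
      (add_left_injective 1)
  have hd1 : Memℓp d 1 := by
    apply memℓp_gen
    simp only [ENNReal.toReal_one, Real.rpow_one]
    exact hsum.of_nonneg_of_le (fun i => norm_nonneg _) hdb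
  have hdp : Memℓp d p := hd1.of_exponent_ge (Fact.out : 1 ≤ p)
  set D : lp (fun _ : ℕ => ℝ) p := ⟨d, hdp⟩ with hD
  have hDapp : ∀ i, D i = d i := fun i => rfl
  refine ⟨y + D, ?_, ?_⟩
  · intro i
    refine ⟨q i, ?_⟩
    have : (y + D) i = y i + d i := rfl
    rw [this]; simp [hd]
  · have hxy : y + D - y = D := by abel
    rw [hxy]
    -- bound the norm of D
    have htsum : (∑' i : ℕ, (1/2:ℝ) ^ (i+1)) = 1 := by
      have h2 : (∑' i : ℕ, (1/2:ℝ) ^ i) = 2 := by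
        rw [tsum_geometric_of_lt_one (by norm_num) (by norm_num)]; norm_num
      simp only [pow_succ, tsum_mul_right, h2]; norm_num
    rcases eq_or_ne p ⊤ with hp | hp
    · subst hp
      apply lp.norm_le_of_forall_le hε.le
      intro i
      refine (hdb i).trans ?_
      nlinarith [pow_le_one₀ (by norm_num : (0:ℝ) ≤ 1/2) (by norm_num : (1/2:ℝ) ≤ 1) (n := i+1),
        hgeom i]
    · have hp1 : (1:ℝ) ≤ p.toReal := by
        rw [← ENNReal.toReal_one]
        exact ENNReal.toReal_mono hp (Fact.out : 1 ≤ p)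
      have hp0 : 0 < p.toReal := lt_of_lt_of_le one_pos hp1
      apply lp.norm_le_of_forall_sum_le hp0 hε.le
      intro s
      have step : ∀ i : ℕ, ‖D i‖ ^ p.toReal ≤ ε ^ p.toReal * (1/2:ℝ) ^ (i+1) := by
        intro i
        have h1 : ‖D i‖ ^ p.toReal ≤ (ε * (1/2:ℝ) ^ (i+1)) ^ p.toReal :=
          Real.rpow_le_rpow (norm_nonneg _) (hdb i) hp0.le
        refine h1.trans ?_
        rw [Real.mul_rpow hε.le (hgeom i)]
        have h2 : ((1/2:ℝ) ^ (i+1)) ^ p.toReal ≤ ((1/2:ℝ) ^ (i+1)) ^ (1:ℝ) := by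
          apply Real.rpow_le_rpow_of_exponent_ge (by positivity) _ hp1
          exact pow_le_one₀ (by norm_num) (by norm_num)
        rw [Real.rpow_one] at h2
        exact mul_le_mul_of_nonneg_left h2 (Real.rpow_nonneg hε.le _)
      calc ∑ i ∈ s, ‖D i‖ ^ p.toReal ≤ ∑ i ∈ s, ε ^ p.toReal * (1/2:ℝ) ^ (i+1) :=
            Finset.sum_le_sum fun i _ => step i
        _ ≤ ∑' i : ℕ, ε ^ p.toReal * (1/2:ℝ) ^ (i+1) := by
            apply Summable.sum_le_tsum _ (fun i _ => by positivity)
            exact Summable.mul_left _ ((summable_geometric_of_lt_one (by norm_num)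
              (by norm_num)).comp_injective (add_left_injective 1))
        _ = ε ^ p.toReal := by rw [tsum_mul_left, htsum, mul_one]

lemma mem_asympCone_rat (p : ENNReal) [Fact (1 ≤ p)]
    (u : lp (fun _ : ℕ => ℝ) p) :
    u ∈ asympCone (inferInstance : TopologicalSpace (lp (fun _ : ℕ => ℝ) p))
      {x : lp (fun _ : ℕ => ℝ) p | ∀ i : ℕ, ∃ q : ℚ, x i = (q : ℝ)} := by
  have hx : ∀ k : ℕ, ∃ x : lp (fun _ : ℕ => ℝ) p,
      (∀ i : ℕ, ∃ q : ℚ, x i = (q : ℝ)) ∧ ‖x - ((k:ℝ)+1) • u‖ ≤ 1 :=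
    fun k => rat_dense_lp p (((k:ℝ)+1) • u) one_pos
  choose x hxK hxn using hx
  refine ⟨fun k => (k:ℝ)+1, x, ?_, hxK, ?_⟩
  · exact tendsto_atTop_add_const_right _ 1 tendsto_natCast_atTop_atTop
  · rw [tendsto_iff_norm_sub_tendsto_zero]
    have hb : ∀ k : ℕ, ‖((k:ℝ)+1)⁻¹ • x k - u‖ ≤ ((k:ℝ)+1)⁻¹ := by
      intro k
      have hk : (0:ℝ) < (k:ℝ)+1 := by positivity
      have : ((k:ℝ)+1)⁻¹ • x k - u = ((k:ℝ)+1)⁻¹ • (x k - ((k:ℝ)+1) • u) := by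
        rw [smul_sub, smul_smul, inv_mul_cancel₀ hk.ne', one_smul]
      rw [this, norm_smul, norm_inv, Real.norm_of_nonneg hk.le]
      calc ((k:ℝ)+1)⁻¹ * ‖x k - ((k:ℝ)+1) • u‖ ≤ ((k:ℝ)+1)⁻¹ * 1 := by
            exact mul_le_mul_of_nonneg_left (hxn k) (by positivity)
        _ = ((k:ℝ)+1)⁻¹ := mul_one _
    apply squeeze_zero (fun k => norm_nonneg _) hb
    exact tendsto_one_div_add_atTop_nhds_zero_nat.congr (fun k => by rw [one_div])

theorem genAsymp_indicator_rat_lp (p : ENNReal) [Fact (1 ≤ p)]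
    (K : Set (lp (fun _ : ℕ => ℝ) p))
    (hK : K = {x : lp (fun _ : ℕ => ℝ) p | ∀ i : ℕ, ∃ q : ℚ, x i = (q : ℝ)})
    (f : lp (fun _ : ℕ => ℝ) p → EReal)
    (hf : ∀ x, f x = (haveI := Classical.propDecidable (x ∈ K)
      if x ∈ K then (0 : EReal) else ⊤)) :
    (∀ u, genAsymp (inferInstance : TopologicalSpace (lp (fun _ : ℕ => ℝ) p)) f u = 0) ∧
      ¬ ∃ M : ℝ, ∀ x, f x ≤ (M : EReal) := by
  constructor
  · intro u
    apply le_antisymm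
    · apply sInf_le
      refine ⟨0, ?_, rfl⟩
      obtain ⟨t, x, ht, hxK, hconv⟩ := mem_asympCone_rat p u
      refine ⟨t, x, ht, fun k => ?_, hconv⟩
      show f (x k) ≤ (((0:ℝ) : EReal))
      have hxk : x k ∈ K := by rw [hK]; exact hxK k
      rw [hf (x k), if_pos hxk]
      norm_num
    · apply le_sInf
      rintro e ⟨lam, hlam, rfl⟩
      obtain ⟨t, x, ht, hxs, hconv⟩ := hlam
      have h0 := hxs 0
      rw [Set.mem_setOf_eq, hf (x 0)] at h0
      split_ifs at h0
      · exact h0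
      · exact absurd (top_le_iff.mp h0) (EReal.coe_ne_top lam)
  · rintro ⟨M, hM⟩
    set x₀ : lp (fun _ : ℕ => ℝ) p := lp.single p 0 (Real.sqrt 2) with hx₀def
    have hx₀ : x₀ ∉ K := by
      rw [hK]
      intro h
      obtain ⟨q, hq⟩ := h 0
      rw [hx₀def, lp.single_apply_self] at hq
      exact irrational_sqrt_two ⟨q, hq.symm⟩
    have := hM x₀
    rw [hf x₀, if_neg hx₀] at this
    exact (EReal.coe_lt_top M).not_ge this
end

section
/- If for each u ∈ K^∞_σ \ {0} there exists y ∈ K with (−ψ(·,y))^∞_σ(u) > 0, then R^E_σ := {u ∈ K^∞_σ : (−ψ(·,y))^{σg}(u) ≤ 0 for all y ∈ K} ⊆ {0}. -/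
open Filter Topology Set

variable {X : Type*} [NormedAddCommGroup X] [NormedSpace ℝ X]

theorem RE_subset_zero_of_asympFun_pos (σ : TopologicalSpace X)
    (hcoarser : (inferInstance : TopologicalSpace X) ≤ σ) (hT2 : @T2Space X σ)
    (K : Set X) (hK : K.Nonempty) (ψ : X → X → ℝ)
    (h : ∀ u ∈ asympCone σ K, u ≠ 0 → ∃ y ∈ K, 0 < asympFun σ (extNeg K ψ y) u) :
    ∀ u ∈ asympCone σ K, (∀ y ∈ K, genAsymp σ (extNeg K ψ y) u ≤ 0) → u = 0 := by
  intro u hu hle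
  by_contra hne
  obtain ⟨y, hyK, hpos⟩ := h u hu hne
  have hg := hle y hyK
  set f := extNeg K ψ y with hf
  -- the set of λ's is nonempty
  have hne' : {lam : ℝ | u ∈ asympCone σ {x | f x ≤ (lam : EReal)}}.Nonempty := by
    by_contra hemp
    rw [Set.not_nonempty_iff_eq_empty] at hemp
    rw [genAsymp, hemp, Set.image_empty, sInf_empty] at hg
    exact absurd hg (by simp)
  obtain ⟨lam, hlam⟩ := hne'
  obtain ⟨t, x, ht, hx, hd⟩ := hlam
  -- asympFun ≤ liminf
  have hmem : liminf (fun n => f (t n • ((t n)⁻¹ • x n)) / ((t n : ℝ) : EReal)) atTop ∈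
      {l : EReal | ∃ t' : ℕ → ℝ, ∃ d : ℕ → X, Tendsto t' atTop atTop ∧
      Tendsto d atTop (@nhds X σ u) ∧
      l = liminf (fun n => f (t' n • d n) / ((t' n : ℝ) : EReal)) atTop} :=
    ⟨t, fun n => (t n)⁻¹ • x n, ht, hd, rfl⟩
  have hle2 : asympFun σ f u ≤
      liminf (fun n => f (t n • ((t n)⁻¹ • x n)) / ((t n : ℝ) : EReal)) atTop :=
    sInf_le hmem
  -- liminf ≤ 0
  have hev : ∀ᶠ n in atTop, f (t n • ((t n)⁻¹ • x n)) / ((t n : ℝ) : EReal) ≤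
      ((lam / t n : ℝ) : EReal) := by
    filter_upwards [ht.eventually_ge_atTop 1] with n hn
    have htpos : (0:ℝ) < t n := lt_of_lt_of_le one_pos hn
    rw [smul_inv_smul₀ (ne_of_gt htpos), EReal.coe_div]
    exact EReal.div_le_div_right_of_nonneg (by exact_mod_cast htpos.le) (hx n)
  have hlim : Tendsto (fun n => ((lam / t n : ℝ) : EReal)) atTop (nhds (0 : EReal)) := by
    have : Tendsto (fun n => lam / t n) atTop (nhds 0) := Tendsto.div_atTop tendsto_const_nhds ht
    exact (EReal.tendsto_coe.2 this).congr (fun n => rfl) |>.mono_right (by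
      rw [show ((0:ℝ):EReal) = (0:EReal) from rfl])
  have h0 : liminf (fun n => ((lam / t n : ℝ) : EReal)) atTop = 0 := by
    rw [hlim.liminf_eq]
  have : liminf (fun n => f (t n • ((t n)⁻¹ • x n)) / ((t n : ℝ) : EReal)) atTop ≤ 0 := by
    rw [← h0]
    exact liminf_le_liminf hev
  exact absurd (hle2.trans this) (not_le.2 hpos)
end

section
/- For ψ : ℝ × ℝ → ℝ defined by ψ(x,y) = y: for every u ∈ ℝ and every y < 0 one has (−ψ(·,y))^{σg}(u) = −y > 0 (so R^E_σ ⊆ {0}), while for every u ≠ 0 and every y ∈ ℝ, (−ψ(·,y))^∞_σ(u) = 0. Hence the converse implication from R^E_σ ⊆ {0} back to positivity of the σ-asymptotic function fails. -/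
open Filter Topology Set

variable {X : Type*} [NormedAddCommGroup X] [NormedSpace ℝ X]

lemma tendsto_nat_succ : Tendsto (fun k : ℕ => (k : ℝ) + 1) atTop atTop :=
  tendsto_atTop_add_const_right _ 1 tendsto_natCast_atTop_atTop

lemma genAsymp_const (c : ℝ) (u : ℝ) :
    genAsymp (inferInstance : TopologicalSpace ℝ) (fun _ : ℝ => ((c : ℝ) : EReal)) u
      = ((c : ℝ) : EReal) := by
  have hset : {lam : ℝ | u ∈ asympCone (inferInstance : TopologicalSpace ℝ)
      {x : ℝ | ((c : ℝ) : EReal) ≤ (lam : EReal)}} = {lam : ℝ | c ≤ lam} := by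
    ext lam
    constructor
    · rintro ⟨t, x, ht, hx, hlim⟩
      exact EReal.coe_le_coe_iff.mp (hx 0)
    · intro h
      refine ⟨fun k => (k : ℝ) + 1, fun k => ((k : ℝ) + 1) • u, tendsto_nat_succ,
        fun k => EReal.coe_le_coe_iff.mpr h, ?_⟩
      have : ∀ k : ℕ, ((k : ℝ) + 1)⁻¹ • (((k : ℝ) + 1) • u) = u := by
        intro k
        have hk : ((k : ℝ) + 1) ≠ 0 := by positivity
        rw [smul_smul, inv_mul_cancel₀ hk, one_smul]
      exact tendsto_const_nhds.congr fun k => (this k).symm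
  rw [genAsymp, hset]
  apply le_antisymm
  · exact sInf_le ⟨c, le_refl c, rfl⟩
  · apply le_sInf
    rintro _ ⟨lam, hlam, rfl⟩
    exact EReal.coe_le_coe_iff.mpr hlam

lemma liminf_const_div (c : ℝ) (t : ℕ → ℝ) (ht : Tendsto t atTop atTop) :
    liminf (fun n => ((c : EReal)) / ((t n : ℝ) : EReal)) atTop = 0 := by
  have h1 : Tendsto (fun n => c / t n) atTop (nhds 0) := by
    simpa [div_eq_mul_inv] using ht.inv_tendsto_atTop.const_mul c
  have h3 : Tendsto (fun n => ((c : EReal)) / ((t n : ℝ) : EReal)) atTop (nhds (0 : EReal)) := by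
    simpa [EReal.coe_div] using (EReal.tendsto_coe.mpr h1)
  exact h3.liminf_eq

theorem converse_fails_example :
    (∀ u : ℝ, ∀ y : ℝ, y < 0 →
      genAsymp (inferInstance : TopologicalSpace ℝ) (fun _ : ℝ => ((-y : ℝ) : EReal)) u
        = ((-y : ℝ) : EReal) ∧ (0 : ℝ) < -y) ∧
    (∀ u : ℝ, (∀ y : ℝ,
      genAsymp (inferInstance : TopologicalSpace ℝ) (fun _ : ℝ => ((-y : ℝ) : EReal)) u ≤ 0)
        → u = 0) ∧
    (∀ u : ℝ, u ≠ 0 → ∀ y : ℝ,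
      asympFun (inferInstance : TopologicalSpace ℝ) (fun _ : ℝ => ((-y : ℝ) : EReal)) u = 0) := by
  refine ⟨fun u y hy => ⟨genAsymp_const (-y) u, by linarith⟩, ?_, ?_⟩
  · intro u h
    exfalso
    have h1 := h (-1)
    rw [genAsymp_const] at h1
    norm_num at h1
    exact absurd h1 (by norm_num : ¬ ((1 : EReal) ≤ 0))
  · intro u _ y
    rw [asympFun]
    have hset : {l : EReal | ∃ t : ℕ → ℝ, ∃ d : ℕ → ℝ, Tendsto t atTop atTop ∧
        Tendsto d atTop (@nhds ℝ (inferInstance : TopologicalSpace ℝ) u) ∧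
        l = liminf (fun n => ((-y : ℝ) : EReal) / ((t n : ℝ) : EReal)) atTop} = {0} := by
      ext l
      constructor
      · rintro ⟨t, d, ht, hd, rfl⟩
        exact liminf_const_div (-y) t ht
      · rintro rfl
        exact ⟨fun k => (k : ℝ) + 1, fun _ => u, tendsto_nat_succ, tendsto_const_nhds,
          (liminf_const_div (-y) _ tendsto_nat_succ).symm⟩
    rw [hset, sInf_singleton]
end

section
/- If ψ : K × K → ℝ satisfies ψ(x,x) = 0 for all x ∈ K, −ψ is pseudomonotone (ψ(x,y) ≤ 0 ⇒ ψ(y,x) ≥ 0 for all x,y), and ψ(·,y) is quasi-concave for each y on the convex set K, then ψ is transfer quasi-convex in y on each K_n: for any finite {y_1,…,y_m} ⊆ K_n there is no x ∈ co{y_1,…,y_m} with ψ(x,y_i) < 0 for all i. -/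
open Filter Topology Set

variable {X : Type*} [NormedAddCommGroup X] [NormedSpace ℝ X]

theorem transfer_quasiconvex_of_pseudomonotone
    (K : Set X) (hK : K.Nonempty) (hconv : Convex ℝ K)
    (ψ : X → X → ℝ)
    (hdiag : ∀ x ∈ K, ψ x x = 0)
    (hpm : ∀ x ∈ K, ∀ y ∈ K, ψ x y ≤ 0 → 0 ≤ ψ y x)
    (hqc : ∀ y ∈ K, ∀ lam : ℝ, Convex ℝ {x ∈ K | lam ≤ ψ x y}) :
    ∀ n : ℕ, ∀ m : ℕ, ∀ ys : Fin m → X, (∀ i, ys i ∈ Kn K n) →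
      ¬ ∃ x ∈ convexHull ℝ (Set.range ys), ∀ i, ψ x (ys i) < 0 := by
  intro n m ys hys
  rintro ⟨x, hx, hlt⟩
  rcases Nat.eq_zero_or_pos m with rfl | hm
  · rw [Set.range_eq_empty, convexHull_empty] at hx
    exact hx
  have hysK : ∀ i, ys i ∈ K := fun i => (hys i).1
  have hxK : x ∈ K := convexHull_min (by rintro z ⟨i, rfl⟩; exact hysK i) hconv hx
  have hpos : ∀ i, 0 < ψ (ys i) x := by
    intro i
    by_contra h
    push_neg at h
    exact absurd (hpm (ys i) (hysK i) x hxK h) (not_le.mpr (hlt i))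
  haveI : Nonempty (Fin m) := Fin.pos_iff_nonempty.mp hm
  set lam : ℝ := Finset.univ.inf' Finset.univ_nonempty (fun i => ψ (ys i) x) with hlam
  have hlampos : 0 < lam := by
    rw [hlam, Finset.lt_inf'_iff]
    exact fun i _ => hpos i
  have hxC : x ∈ {z ∈ K | lam ≤ ψ z x} := by
    refine convexHull_min ?_ (hqc x hxK lam) hx
    rintro z ⟨i, rfl⟩
    exact ⟨hysK i, Finset.inf'_le _ (Finset.mem_univ i)⟩
  have := hxC.2
  rw [hdiag x hxK] at this
  exact absurd this (not_le.mpr hlampos)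
end

section
/- Let f : ℝ → ℝ be defined by f(x) = −arctan(x) for x ≤ 0, f(x) = x for 0 < x ≤ √3/6, f(x) = −x + √3/3 for √3/6 ≤ x < √3/3, and f(x) = arctan(x) for x ≥ √3/3. Then, with σ the usual topology on ℝ, f^{σg}(u) = π/2 for all u ≠ 0 and f^{σg}(0) = inf f = 0; moreover argmin(f, ℝ) = {0} is nonempty and compact, while f is neither lower semicontinuous nor quasi-convex. -/
open Filter Topology Set

variable {X : Type*} [NormedAddCommGroup X] [NormedSpace ℝ X]

/-!
For `u ≠ 0` the value `π / 2` comes from the tails: `f = arctan |·|` outside `(0, √3/3)`, so every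
sublevel set `[f ≤ λ]` with `λ < π / 2` is bounded and has trivial asymptotic cone, while
`[f ≤ π / 2]` is all of `ℝ`. At `u = 0` the asymptotic cone of `[f ≤ λ]` contains `0` exactly when
the set is nonempty, so `f^{σg}(0) = min f = f 0 = 0`. The tent `x ↦ min (x, √3/3 - x)` on
`(0, √3/3)` drops to `0` just left of `√3/3`, where `f` jumps to `arctan (√3/3) > 0`: this breaks
lower semicontinuity there, and makes `[f ≤ √3/12]` contain `0` and `√3/4` but not `√3/6`.
-/

section AsympCone

theorem asympCone_mono (σ : TopologicalSpace X) {K L : Set X} (h : K ⊆ L) :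
    asympCone σ K ⊆ asympCone σ L := fun _ ⟨t, x, ht, hx, hlim⟩ ↦ ⟨t, x, ht, fun k ↦ h (hx k), hlim⟩

theorem nonempty_of_mem_asympCone {σ : TopologicalSpace X} {K : Set X} {u : X}
    (hu : u ∈ asympCone σ K) : K.Nonempty :=
  let ⟨_, x, _, hx, _⟩ := hu; ⟨x 0, hx 0⟩

theorem tendsto_natCast_add_one_atTop : Tendsto (fun k : ℕ ↦ (k : ℝ) + 1) atTop atTop :=
  tendsto_atTop_add_const_right _ 1 tendsto_natCast_atTop_atTop

theorem mem_asympCone_univ (u : X) : u ∈ asympCone inferInstance (univ : Set X) := by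
  refine ⟨fun k ↦ (k : ℝ) + 1, fun k ↦ ((k : ℝ) + 1) • u, tendsto_natCast_add_one_atTop,
    fun _ ↦ mem_univ _, ?_⟩
  have hk : ∀ k : ℕ, ((k : ℝ) + 1)⁻¹ • (((k : ℝ) + 1) • u) = u :=
    fun k ↦ inv_smul_smul₀ (by positivity) u
  simp only [hk]
  exact tendsto_const_nhds

theorem zero_mem_asympCone {K : Set X} (hK : K.Nonempty) : (0 : X) ∈ asympCone inferInstance K := by
  obtain ⟨x₀, hx₀⟩ := hK
  refine ⟨fun k ↦ (k : ℝ) + 1, fun _ ↦ x₀, tendsto_natCast_add_one_atTop, fun _ ↦ hx₀, ?_⟩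
  simpa using (tendsto_inv_atTop_zero.comp tendsto_natCast_add_one_atTop).smul_const x₀

theorem eq_zero_of_mem_asympCone_of_isBounded {K : Set X} (hK : Bornology.IsBounded K) {u : X}
    (hu : u ∈ asympCone inferInstance K) : u = 0 := by
  obtain ⟨t, x, ht, hx, hlim⟩ := hu
  obtain ⟨C, hC⟩ := isBounded_iff_forall_norm_le.1 hK
  have hbound : Tendsto (fun k ↦ |t k|⁻¹ * C) atTop (𝓝 0) := by
    simpa using (tendsto_inv_atTop_zero.comp (tendsto_abs_atTop_atTop.comp ht)).mul_const C
  refine tendsto_nhds_unique hlim (squeeze_zero_norm (fun k ↦ ?_) hbound)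
  rw [norm_smul, norm_inv, Real.norm_eq_abs]
  exact mul_le_mul_of_nonneg_left (hC _ (hx k)) (by positivity)

end AsympCone

section GenAsymp

variable {f : X → ℝ}

theorem genAsymp_coe_eq_of_isLeast (σ : TopologicalSpace X) {u : X} {a : ℝ}
    (h : IsLeast {lam : ℝ | u ∈ asympCone σ {x | f x ≤ lam}} a) :
    genAsymp σ (fun x ↦ (f x : EReal)) u = a := by
  simp only [genAsymp, EReal.coe_le_coe_iff]
  exact (EReal.coe_strictMono.monotone.map_isLeast h).isGLB.sInf_eq

theorem genAsymp_coe_zero_eq_of_forall_le {x₀ : X} (hx₀ : ∀ y, f x₀ ≤ f y) :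
    genAsymp inferInstance (fun x ↦ (f x : EReal)) 0 = f x₀ :=
  genAsymp_coe_eq_of_isLeast _
    ⟨zero_mem_asympCone ⟨x₀, le_refl (f x₀)⟩, fun _ hlam ↦
      let ⟨x, hx⟩ := nonempty_of_mem_asympCone hlam; (hx₀ x).trans hx⟩

theorem genAsymp_coe_eq_of_isBounded_sublevel {M : ℝ} (hM : ∀ x, f x ≤ M)
    (hbdd : ∀ lam < M, Bornology.IsBounded {x | f x ≤ lam}) {u : X} (hu : u ≠ 0) :
    genAsymp inferInstance (fun x ↦ (f x : EReal)) u = M := by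
  refine genAsymp_coe_eq_of_isLeast _ ⟨asympCone_mono _ (fun x _ ↦ hM x) (mem_asympCone_univ u), ?_⟩
  intro lam hlam
  by_contra! hlt
  exact hu (eq_zero_of_mem_asympCone_of_isBounded (hbdd lam hlt) hlam)

end GenAsymp

theorem sqrt_three_lt_two : Real.sqrt 3 < 2 := (Real.sqrt_lt' two_pos).2 (by norm_num)

structure IsTentArctan (f : ℝ → ℝ) : Prop where
  of_nonpos : ∀ x : ℝ, x ≤ 0 → f x = -Real.arctan x
  of_pos_of_le : ∀ x : ℝ, 0 < x → x ≤ Real.sqrt 3 / 6 → f x = x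
  of_le_of_lt : ∀ x : ℝ, Real.sqrt 3 / 6 ≤ x → x < Real.sqrt 3 / 3 → f x = -x + Real.sqrt 3 / 3
  of_le : ∀ x : ℝ, Real.sqrt 3 / 3 ≤ x → f x = Real.arctan x

namespace IsTentArctan

variable {f : ℝ → ℝ}

theorem eq_arctan_abs_or (hf : IsTentArctan f) (x : ℝ) :
    f x = Real.arctan |x| ∨ (|x| < Real.sqrt 3 / 3 ∧ 0 < f x ∧ f x ≤ Real.sqrt 3 / 6) := by
  rcases le_or_gt x 0 with hx | hx
  · exact .inl (by rw [hf.of_nonpos x hx, abs_of_nonpos hx, Real.arctan_neg])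
  rcases le_or_gt (Real.sqrt 3 / 3) x with hx₃ | hx₃
  · exact .inl (by rw [hf.of_le x hx₃, abs_of_pos hx])
  rw [abs_of_pos hx]
  rcases le_or_gt x (Real.sqrt 3 / 6) with hx₆ | hx₆
  · exact .inr ⟨hx₃, by rw [hf.of_pos_of_le x hx hx₆]; exact ⟨hx, hx₆⟩⟩
  · refine .inr ⟨hx₃, ?_⟩
    rw [hf.of_le_of_lt x hx₆.le hx₃]
    constructor <;> linarith

theorem nonneg (hf : IsTentArctan f) (x : ℝ) : 0 ≤ f x := by
  rcases hf.eq_arctan_abs_or x with h | ⟨-, h, -⟩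
  · exact h ▸ Real.arctan_nonneg.2 (abs_nonneg x)
  · exact h.le

theorem map_zero (hf : IsTentArctan f) : f 0 = 0 := by
  rw [hf.of_nonpos 0 le_rfl, Real.arctan_zero, neg_zero]

theorem map_zero_le (hf : IsTentArctan f) (y : ℝ) : f 0 ≤ f y :=
  hf.map_zero.trans_le (hf.nonneg y)

theorem eq_zero_iff (hf : IsTentArctan f) {x : ℝ} : f x = 0 ↔ x = 0 := by
  refine ⟨fun h0 ↦ ?_, fun hx ↦ hx ▸ hf.map_zero⟩
  rcases hf.eq_arctan_abs_or x with h | ⟨-, h, -⟩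
  · rwa [h, Real.arctan_eq_zero_iff, abs_eq_zero] at h0
  · exact absurd h0 h.ne'

theorem lt_pi_div_two (hf : IsTentArctan f) (x : ℝ) : f x < Real.pi / 2 := by
  rcases hf.eq_arctan_abs_or x with h | ⟨-, -, h⟩
  · exact h ▸ Real.arctan_lt_pi_div_two _
  · linarith [sqrt_three_lt_two, Real.pi_gt_three]

theorem isBounded_sublevel (hf : IsTentArctan f) {lam : ℝ} (hlam : lam < Real.pi / 2) :
    Bornology.IsBounded {x | f x ≤ lam} := by
  refine isBounded_iff_forall_norm_le.2 ⟨max (Real.tan lam) (Real.sqrt 3 / 3), fun x hx ↦ ?_⟩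
  rw [Real.norm_eq_abs]
  rcases hf.eq_arctan_abs_or x with h | ⟨h, -⟩
  · have hlam₀ : 0 ≤ lam := (hf.nonneg x).trans hx
    rw [mem_ofPred_eq, h, ← Real.arctan_tan (by linarith [Real.pi_pos]) hlam,
      Real.arctan_le_arctan_iff] at hx
    exact le_max_of_le_left hx
  · exact le_max_of_le_right h.le

theorem setOf_isMin_eq (hf : IsTentArctan f) : {x : ℝ | ∀ y, f x ≤ f y} = {0} := by
  ext x
  refine ⟨fun hx ↦ hf.eq_zero_iff.1 (le_antisymm (hf.map_zero ▸ hx 0) (hf.nonneg x)), ?_⟩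
  rintro rfl
  exact hf.map_zero_le

theorem not_lowerSemicontinuous (hf : IsTentArctan f) : ¬ LowerSemicontinuous f := by
  intro hlsc
  have ha : Real.sqrt 3 / 6 < Real.sqrt 3 / 3 := by
    have := Real.sqrt_pos.2 (show (0 : ℝ) < 3 by norm_num); linarith
  set a := Real.sqrt 3 / 3
  have hfa : 0 < f a := by
    rw [hf.of_le a le_rfl]
    exact Real.arctan_pos.2 (by positivity)
  have h_above : ∀ᶠ x in 𝓝[<] a, f a / 2 < f x :=
    nhdsWithin_le_nhds (hlsc a _ (half_lt_self hfa))
  have h_tent : ∀ᶠ x in 𝓝[<] a, f x = a - x :=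
    mem_of_superset (Ioo_mem_nhdsLT ha) fun x hx ↦ show f x = a - x by
      rw [hf.of_le_of_lt x hx.1.le hx.2]; ring
  have h_small : ∀ᶠ x in 𝓝[<] a, a - x < f a / 2 := by
    have : Tendsto (fun x ↦ a - x) (𝓝 a) (𝓝 (a - a)) := tendsto_const_nhds.sub tendsto_id
    rw [sub_self] at this
    exact (this.mono_left nhdsWithin_le_nhds).eventually (gt_mem_nhds (half_pos hfa))
  obtain ⟨x, h₁, h₂, h₃⟩ := (h_above.and (h_tent.and h_small)).exists
  linarith

theorem not_convex_sublevel (hf : IsTentArctan f) :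
    ¬ Convex ℝ {x : ℝ | f x ≤ Real.sqrt 3 / 12} := by
  have hs : 0 < Real.sqrt 3 := by positivity
  intro hconv
  have h₀ : (0 : ℝ) ∈ {x | f x ≤ Real.sqrt 3 / 12} := by
    rw [mem_ofPred_eq, hf.map_zero]; positivity
  have h₄ : Real.sqrt 3 / 4 ∈ {x | f x ≤ Real.sqrt 3 / 12} := by
    rw [mem_ofPred_eq, hf.of_le_of_lt _ (by linarith) (by linarith)]; linarith
  have h₆ := (convex_iff_ordConnected.1 hconv).out h₀ h₄
    (show Real.sqrt 3 / 6 ∈ Icc 0 (Real.sqrt 3 / 4) from ⟨by positivity, by linarith⟩)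
  rw [mem_ofPred_eq, hf.of_pos_of_le _ (by positivity) le_rfl] at h₆
  linarith

end IsTentArctan

theorem minimization_example (f : ℝ → ℝ)
    (h1 : ∀ x : ℝ, x ≤ 0 → f x = -Real.arctan x)
    (h2 : ∀ x : ℝ, 0 < x → x ≤ Real.sqrt 3 / 6 → f x = x)
    (h3 : ∀ x : ℝ, Real.sqrt 3 / 6 ≤ x → x < Real.sqrt 3 / 3 → f x = -x + Real.sqrt 3 / 3)
    (h4 : ∀ x : ℝ, Real.sqrt 3 / 3 ≤ x → f x = Real.arctan x) :
    (∀ u : ℝ, u ≠ 0 →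
      genAsymp (inferInstance : TopologicalSpace ℝ) (fun x => ((f x : ℝ) : EReal)) u
        = ((Real.pi / 2 : ℝ) : EReal)) ∧
    genAsymp (inferInstance : TopologicalSpace ℝ) (fun x => ((f x : ℝ) : EReal)) 0 = 0 ∧
    (⨅ x : ℝ, f x) = 0 ∧
    {x : ℝ | ∀ y : ℝ, f x ≤ f y} = {0} ∧
    ({x : ℝ | ∀ y : ℝ, f x ≤ f y}).Nonempty ∧
    IsCompact {x : ℝ | ∀ y : ℝ, f x ≤ f y} ∧
    ¬ LowerSemicontinuous f ∧
    ¬ (∀ lam : ℝ, Convex ℝ {x : ℝ | f x ≤ lam}) := by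
  have hf : IsTentArctan f := ⟨h1, h2, h3, h4⟩
  rw [hf.setOf_isMin_eq]
  refine ⟨fun u hu ↦ genAsymp_coe_eq_of_isBounded_sublevel (fun x ↦ (hf.lt_pi_div_two x).le)
      (fun _ ↦ hf.isBounded_sublevel) hu, ?_,
    ciInf_eq_of_forall_ge_of_forall_gt_exists_lt hf.nonneg fun _ hw ↦ ⟨0, hf.map_zero.trans_lt hw⟩,
    rfl, singleton_nonempty 0, isCompact_singleton, hf.not_lowerSemicontinuous,
    fun h ↦ hf.not_convex_sublevel (h _)⟩
  rw [genAsymp_coe_zero_eq_of_forall_le hf.map_zero_le, hf.map_zero, EReal.coe_zero]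
end
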